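/- For every inner product b on a three-dimensional real vector space V, the special orthogonal group SO(V; b) = {d ∈ GL(V) : b(dv, dw) = b(v,w) for all v, w, and det d = 1} is a rotation group: for any two pairs consisting of a half-plane and a ray on its boundary, there is exactly one element of SO(V; b) mapping one pair to the other. -/

import Mathlib

/-- The ray (half-line) spanned by `v`: all nonnegative multiples of `v`. -/
def Ray' {V : Type*} [AddCommGroup V] [Module ℝ V] (v : V) : Set V :=
  {x | ∃ c : ℝ, 0 ≤ c ∧ x = c • v}

/-- The half-plane `ℝ v + ℝ≥0 w`. -/
def HalfPlane {V : Type*} [AddCommGroup V] [Module ℝ V] (v w : V) : Set V :=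
  {x | ∃ a b : ℝ, 0 ≤ b ∧ x = a • v + b • w}

/-- `D` is a rotation group: for any two pairs of (half-plane, ray on its boundary)
there is exactly one element of `D` mapping the first pair to the second. -/
def IsRotationGroup {V : Type*} [AddCommGroup V] [Module ℝ V]
    (D : Subgroup (V ≃ₗ[ℝ] V)) : Prop :=
  ∀ v w v' w' : V, LinearIndependent ℝ ![v, w] → LinearIndependent ℝ ![v', w'] →
    ∃! d : V ≃ₗ[ℝ] V, d ∈ D ∧
      (d : V ≃ₗ[ℝ] V) '' HalfPlane v w = HalfPlane v' w' ∧
      (d : V ≃ₗ[ℝ] V) '' Ray' v = Ray' v'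

/-- `w ⊥ v` : some rotation sends `w` to `-w` and fixes `v`. -/
def Perp {V : Type*} [AddCommGroup V] [Module ℝ V]
    (D : Subgroup (V ≃ₗ[ℝ] V)) (w v : V) : Prop :=
  ∃ r ∈ D, r w = -w ∧ r v = v

/-!
Gram–Schmidt replaces a pair (half-plane, ray on its boundary) by an orthonormal pair `(e₀, e₁)`:
the ray is spanned by `e₀` and the half-plane is `ℝ e₀ + ℝ≥0 e₁`. An isometry maps one such pair
onto another exactly when it maps the first orthonormal pair onto the second. Extend both pairs to
orthonormal bases; the isometry matching the bases has determinant `±1`, and composing with the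
reflection in the hyperplane orthogonal to the last vector fixes the sign. It is unique: if two
isometries agree on all but one vector of an orthonormal basis, they differ on it by a scalar
factor `γ`, and their determinants differ by the same factor.
-/

open Module InnerProductSpace

theorem Module.Basis.det_comp_self {ι R M : Type*} [Fintype ι] [DecidableEq ι] [CommRing R]
    [AddCommGroup M] [Module R M] (e : Basis ι R M) (f : M →ₗ[R] M) :
    e.det (f ∘ e) = LinearMap.det f := by
  rw [e.det_comp, e.det_self, mul_one]

section Flags

variable {V W F : Type*} [AddCommGroup V] [Module ℝ V] [AddCommGroup W] [Module ℝ W]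
  [FunLike F V W] [LinearMapClass F ℝ V W]

theorem image_ray' (f : F) (v : V) : f '' Ray' v = Ray' (f v) := by
  ext x
  constructor
  · rintro ⟨y, ⟨c, hc, rfl⟩, rfl⟩
    exact ⟨c, hc, map_smul f c v⟩
  · rintro ⟨c, hc, rfl⟩
    exact ⟨c • v, ⟨c, hc, rfl⟩, map_smul f c v⟩

theorem image_halfPlane (f : F) (v w : V) : f '' HalfPlane v w = HalfPlane (f v) (f w) := by
  ext x
  constructor
  · rintro ⟨y, ⟨a, b, hb, rfl⟩, rfl⟩
    exact ⟨a, b, hb, by simp⟩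
  · rintro ⟨a, b, hb, rfl⟩
    exact ⟨a • v + b • w, ⟨a, b, hb, rfl⟩, by simp⟩

theorem ray'_smul {c : ℝ} (hc : 0 < c) (v : V) : Ray' (c • v) = Ray' v := by
  ext x
  constructor
  · rintro ⟨t, ht, rfl⟩
    exact ⟨t * c, by positivity, by rw [smul_smul]⟩
  · rintro ⟨t, ht, rfl⟩
    exact ⟨t / c, by positivity, by rw [smul_smul, div_mul_cancel₀ _ hc.ne']⟩

theorem halfPlane_smul_left {c : ℝ} (hc : c ≠ 0) (v w : V) :
    HalfPlane (c • v) w = HalfPlane v w := by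
  ext x
  constructor
  · rintro ⟨a, b, hb, rfl⟩
    exact ⟨a * c, b, hb, by rw [smul_smul]⟩
  · rintro ⟨a, b, hb, rfl⟩
    exact ⟨a / c, b, hb, by rw [smul_smul, div_mul_cancel₀ _ hc]⟩

theorem halfPlane_smul_right {c : ℝ} (hc : 0 < c) (v w : V) :
    HalfPlane v (c • w) = HalfPlane v w := by
  ext x
  constructor
  · rintro ⟨a, b, hb, rfl⟩
    exact ⟨a, b * c, by positivity, by rw [smul_smul]⟩
  · rintro ⟨a, b, hb, rfl⟩
    exact ⟨a, b / c, by positivity, by rw [smul_smul, div_mul_cancel₀ _ hc.ne']⟩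

theorem halfPlane_sub_smul (c : ℝ) (v w : V) : HalfPlane v (w - c • v) = HalfPlane v w := by
  ext x
  constructor
  · rintro ⟨a, b, hb, rfl⟩
    exact ⟨a - b * c, b, hb, by module⟩
  · rintro ⟨a, b, hb, rfl⟩
    exact ⟨a + b * c, b, hb, by module⟩

end Flags

section InnerProduct

variable {V : Type*} [NormedAddCommGroup V] [InnerProductSpace ℝ V]

theorem exists_orthonormal_flag {v w : V} (h : LinearIndependent ℝ ![v, w]) :
    ∃ e : Fin 2 → V, Orthonormal ℝ e ∧ Ray' v = Ray' (e 0) ∧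
      HalfPlane v w = HalfPlane (e 0) (e 1) := by
  have hu0 : gramSchmidt ℝ ![v, w] 0 = v := by
    rw [gramSchmidt_def, show Finset.Iio (0 : Fin 2) = ∅ by decide]
    simp
  have hu1 : gramSchmidt ℝ ![v, w] 1 = w - (⟪v, w⟫_ℝ / ‖v‖ ^ 2) • v := by
    rw [gramSchmidt_def, show Finset.Iio (1 : Fin 2) = {0} by decide]
    simp [Submodule.starProjection_singleton, hu0]
  have hu : ∀ i, 0 < ‖gramSchmidt ℝ ![v, w] i‖⁻¹ := fun i =>
    inv_pos.2 (norm_pos_iff.2 (gramSchmidt_ne_zero i h))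
  refine ⟨gramSchmidtNormed ℝ ![v, w], gramSchmidtNormed_orthonormal h, ?_, ?_⟩
  · simp only [gramSchmidtNormed, RCLike.ofReal_real_eq_id, id]
    rw [ray'_smul (hu 0), hu0]
  · simp only [gramSchmidtNormed, RCLike.ofReal_real_eq_id, id]
    rw [halfPlane_smul_left (hu 0).ne', halfPlane_smul_right (hu 1), hu0, hu1,
      halfPlane_sub_smul]

theorem Orthonormal.eq_of_ray'_eq_of_halfPlane_eq {e f : Fin 2 → V} (he : Orthonormal ℝ e)
    (hf : Orthonormal ℝ f) (hray : Ray' (e 0) = Ray' (f 0))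
    (hhp : HalfPlane (e 0) (e 1) = HalfPlane (f 0) (f 1)) : e = f := by
  obtain ⟨c, hc, hce⟩ : e 0 ∈ Ray' (f 0) := hray ▸ ⟨1, zero_le_one, (one_smul ℝ _).symm⟩
  have h0 : e 0 = f 0 := by
    have hnorm := he.1 0
    rw [hce, norm_smul, hf.1 0, mul_one, Real.norm_of_nonneg hc] at hnorm
    rw [hce, hnorm, one_smul]
  obtain ⟨a, b, hb, hab⟩ : e 1 ∈ HalfPlane (f 0) (f 1) :=
    hhp ▸ ⟨0, 1, zero_le_one, by rw [zero_smul, one_smul, zero_add]⟩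
  have ha : a = 0 := by
    have hperp : ⟪e 0, e 1⟫_ℝ = 0 := he.2 (by decide)
    rw [h0, hab, inner_add_right, real_inner_smul_right, real_inner_smul_right,
      real_inner_self_eq_norm_sq, hf.1 0, hf.2 (by decide)] at hperp
    linarith
  have h1 : e 1 = f 1 := by
    have hnorm := he.1 1
    rw [hab, ha, zero_smul, zero_add, norm_smul, hf.1 1, mul_one,
      Real.norm_of_nonneg hb] at hnorm
    rw [hab, ha, hnorm, zero_smul, zero_add, one_smul]
  ext i : 1
  fin_cases i
  exacts [h0, h1]

theorem Orthonormal.exists_orthonormalBasis_castSucc_eq {n : ℕ} (hdim : finrank ℝ V = n + 1)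
    {e : Fin n → V} (he : Orthonormal ℝ e) :
    ∃ E : OrthonormalBasis (Fin (n + 1)) ℝ V, ∀ k, E k.castSucc = e k := by
  let σ := Equiv.ofInjective _ (Fin.castSucc_injective n)
  have hrestrict : Orthonormal ℝ
      ((Set.range Fin.castSucc).domRestrict (Fin.snoc (α := fun _ => V) e 0)) := by
    convert he.comp σ.symm σ.symm.injective
    ext ⟨_, k, rfl⟩
    simp [σ, Equiv.ofInjective_symm_apply]
  have : FiniteDimensional ℝ V := .of_finrank_eq_succ hdim
  obtain ⟨E, hE⟩ := hrestrict.exists_orthonormalBasis_extension_of_card_eq (by simpa using hdim)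
  exact ⟨E, fun k => by simpa using hE _ ⟨k, rfl⟩⟩

variable {ι : Type*} [Fintype ι] [DecidableEq ι]

theorem OrthonormalBasis.exists_det_eq_one_apply_eq (E F : OrthonormalBasis ι ℝ V) (i : ι) :
    ∃ d : V ≃ₗᵢ[ℝ] V, LinearMap.det (d.toLinearEquiv : V →ₗ[ℝ] V) = 1 ∧
      ∀ j ≠ i, d (E j) = F j := by
  have : FiniteDimensional ℝ V := .of_basis E.toBasis
  let d₀ := E.repr.trans F.repr.symm
  have hd₀ : ∀ j, d₀ (E j) = F j := by simp [d₀]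
  have hdet₀ : LinearMap.det (d₀.toLinearEquiv : V →ₗ[ℝ] V) = E.toBasis.det F := by
    rw [← E.toBasis.det_comp_self]
    congr 1
    ext j
    simp [hd₀]
  rcases E.det_to_matrix_orthonormalBasis_real F with h | h
  · exact ⟨d₀, hdet₀.trans h, fun j _ => hd₀ j⟩
  let r := (ℝ ∙ F i)ᗮ.reflection
  refine ⟨d₀.trans r, ?_, fun j hj => ?_⟩
  · have hFi : F i ≠ 0 := F.orthonormal.ne_zero i
    rw [LinearIsometryEquiv.toLinearEquiv_trans, LinearEquiv.coe_trans, LinearMap.det_comp,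
      hdet₀, h, Submodule.det_reflection, Submodule.orthogonal_orthogonal,
      finrank_span_singleton hFi]
    norm_num
  · rw [LinearIsometryEquiv.trans_apply, hd₀]
    exact Submodule.reflection_mem_subspace_eq_self
      (Submodule.mem_orthogonal_singleton_iff_inner_right.2 (F.orthonormal.2 hj.symm))

theorem OrthonormalBasis.eq_of_det_eq_one_of_forall_ne (E : OrthonormalBasis ι ℝ V) (i : ι)
    {d d' : V ≃ₗᵢ[ℝ] V} (hd : LinearMap.det (d.toLinearEquiv : V →ₗ[ℝ] V) = 1)
    (hd' : LinearMap.det (d'.toLinearEquiv : V →ₗ[ℝ] V) = 1)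
    (h : ∀ j ≠ i, d (E j) = d' (E j)) : d = d' := by
  set F := E.map d'
  have hF : ∀ j, F j = d' (E j) := fun j => E.map_apply d' j
  set γ := ⟪F i, d (E i)⟫_ℝ
  have hdEi : d (E i) = γ • F i := by
    conv_lhs => rw [← F.sum_repr' (d (E i))]
    refine Finset.sum_eq_single i (fun j _ hj => ?_) (by simp)
    rw [hF, ← h j hj, d.inner_map_map, E.orthonormal.2 hj, zero_smul]
  have hdE : ⇑d ∘ ⇑E.toBasis = Function.update (⇑F) i (γ • F i) := by
    ext j
    rcases eq_or_ne j i with rfl | hj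
    · simp [hdEi]
    · simp [hj, hF, h j hj]
  have hdet : ∀ g : V ≃ₗᵢ[ℝ] V,
      E.toBasis.det (g ∘ E.toBasis) = LinearMap.det (g.toLinearEquiv : V →ₗ[ℝ] V) := fun g =>
    E.toBasis.det_comp_self g.toLinearEquiv
  have hd'E : ⇑d' ∘ ⇑E.toBasis = ⇑F := by
    ext j
    simp [hF]
  have hγ : γ = 1 := calc
    γ = γ * E.toBasis.det (d' ∘ E.toBasis) := by rw [hdet, hd', mul_one]
    _ = E.toBasis.det (d ∘ E.toBasis) := by
      rw [hd'E, hdE, AlternatingMap.map_update_smul, Function.update_eq_self, smul_eq_mul]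
    _ = 1 := by rw [hdet, hd]
  refine LinearIsometryEquiv.toLinearEquiv_injective (E.toBasis.ext' fun j => ?_)
  rcases eq_or_ne j i with rfl | hj
  · simp [hdEi, hγ, hF]
  · simpa using h j hj

theorem existsUnique_linearIsometryEquiv_det_eq_one_apply_eq {n : ℕ}
    (hdim : finrank ℝ V = n + 1) {e f : Fin n → V} (he : Orthonormal ℝ e) (hf : Orthonormal ℝ f) :
    ∃! d : V ≃ₗᵢ[ℝ] V, LinearMap.det (d.toLinearEquiv : V →ₗ[ℝ] V) = 1 ∧ ∀ k, d (e k) = f k := by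
  obtain ⟨E, hE⟩ := he.exists_orthonormalBasis_castSucc_eq hdim
  obtain ⟨F, hF⟩ := hf.exists_orthonormalBasis_castSucc_eq hdim
  obtain ⟨d, hdet, hd⟩ := E.exists_det_eq_one_apply_eq F (Fin.last n)
  refine ⟨d, ⟨hdet, fun k => ?_⟩, ?_⟩
  · rw [← hE, ← hF, hd _ (Fin.castSucc_ne_last k)]
  rintro d' ⟨hdet', hd'⟩
  refine E.eq_of_det_eq_one_of_forall_ne (Fin.last n) hdet' hdet fun j hj => ?_
  obtain ⟨k, rfl⟩ := Fin.exists_castSucc_eq.2 hj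
  rw [hE, hd', ← hE, hd _ hj, hF]

theorem Orthonormal.image_flag_eq_iff {e f : Fin 2 → V} (he : Orthonormal ℝ e)
    (hf : Orthonormal ℝ f) (d : V →ₗᵢ[ℝ] V) :
    (d '' HalfPlane (e 0) (e 1) = HalfPlane (f 0) (f 1) ∧ d '' Ray' (e 0) = Ray' (f 0)) ↔
      ∀ k, d (e k) = f k := by
  rw [image_halfPlane, image_ray']
  refine ⟨fun ⟨hhp, hray⟩ => congrFun ?_, fun h => by simp only [h, and_self]⟩
  exact (he.comp_linearIsometry d).eq_of_ray'_eq_of_halfPlane_eq hf hray hhp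

theorem existsUnique_special_orthogonal_map_flag (hdim : finrank ℝ V = 3) {v w v' w' : V}
    (h : LinearIndependent ℝ ![v, w]) (h' : LinearIndependent ℝ ![v', w']) :
    ∃! d : V ≃ₗ[ℝ] V,
      ((∀ x y : V, ⟪d x, d y⟫_ℝ = ⟪x, y⟫_ℝ) ∧ LinearMap.det (d : V →ₗ[ℝ] V) = 1) ∧
      d '' HalfPlane v w = HalfPlane v' w' ∧ d '' Ray' v = Ray' v' := by
  obtain ⟨e, he, hv, hvw⟩ := exists_orthonormal_flag h
  obtain ⟨f, hf, hv', hvw'⟩ := exists_orthonormal_flag h'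
  obtain ⟨d, ⟨hdet, hd⟩, huniq⟩ :=
    existsUnique_linearIsometryEquiv_det_eq_one_apply_eq hdim he hf
  rw [hv, hvw, hv', hvw']
  refine ⟨d.toLinearEquiv,
    ⟨⟨d.inner_map_map, hdet⟩, (he.image_flag_eq_iff hf d.toLinearIsometry).2 hd⟩, ?_⟩
  rintro d' ⟨⟨hiso, hdet'⟩, hflag⟩
  let d'' := d'.isometryOfInner hiso
  exact congrArg LinearIsometryEquiv.toLinearEquiv
    (huniq d'' ⟨hdet', (he.image_flag_eq_iff hf d''.toLinearIsometry).1 hflag⟩)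

end InnerProduct

abbrev innerCoreOfPosDef {V : Type*} [AddCommGroup V] [Module ℝ V] (b : V →ₗ[ℝ] V →ₗ[ℝ] ℝ)
    (hsymm : ∀ x y : V, b x y = b y x) (hpos : ∀ x : V, x ≠ 0 → 0 < b x x) :
    InnerProductSpace.Core ℝ V where
  inner x y := b x y
  conj_inner_symm x y := hsymm y x
  re_inner_nonneg x := by
    rcases eq_or_ne x 0 with rfl | hx
    · simp
    · exact (hpos x hx).le
  definite x hx := by_contra fun h => (hpos x h).ne' hx
  add_left x y z := by simp
  smul_left x y r := by simp

theorem stmt14 {V : Type*} [AddCommGroup V] [Module ℝ V]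
    (hdim : Module.finrank ℝ V = 3)
    (b : V →ₗ[ℝ] V →ₗ[ℝ] ℝ)
    (hsymm : ∀ x y : V, b x y = b y x)
    (hpos : ∀ x : V, x ≠ 0 → 0 < b x x) :
    ∀ v w v' w' : V, LinearIndependent ℝ ![v, w] → LinearIndependent ℝ ![v', w'] →
      ∃! d : V ≃ₗ[ℝ] V,
        ((∀ x y : V, b (d x) (d y) = b x y) ∧
          LinearMap.det (d : V →ₗ[ℝ] V) = 1) ∧
        (d : V ≃ₗ[ℝ] V) '' HalfPlane v w = HalfPlane v' w' ∧
        (d : V ≃ₗ[ℝ] V) '' Ray' v = Ray' v' := by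
  let core := innerCoreOfPosDef b hsymm hpos
  let _ : NormedAddCommGroup V := core.toNormedAddCommGroup
  let _ : InnerProductSpace ℝ V := InnerProductSpace.ofCore core.toCore
  exact fun v w v' w' h h' => existsUnique_special_orthogonal_map_flag hdim h h'
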